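/- Let Q be the n×n tridiagonal matrix with diagonal entries -v_1,...,-v_n (each v_i ≥ 2) and 1's on the super- and sub-diagonals. Then Q is invertible and every entry of Q^{-1} is strictly negative. -/

import Mathlib

open Matrix

/-- The tridiagonal matrix with diagonal entries `-v i` and `1`'s on the
super- and sub-diagonal. -/
def triQ {n : ℕ} (v : Fin n → ℤ) : Matrix (Fin n) (Fin n) ℝ :=
  Matrix.of fun i j =>
    if i = j then -(v i : ℝ)
    else if (i : ℕ) + 1 = (j : ℕ) ∨ (j : ℕ) + 1 = (i : ℕ) then 1 else 0

/-!
Write `-Q = L + diagonal q`, where `L` is the Laplacian of the path graph and `q i = v i - deg i`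
is nonnegative and positive at an endpoint. On any connected graph such an operator obeys a
minimum principle: if `(L + diagonal q) x ≥ 0` and `x` has a negative minimum, the row at a
minimum point forces its neighbours to be minimal and `q` to vanish there, so connectedness gives
`q = 0`. Hence `L + diagonal q` is injective with entrywise nonnegative inverse. Moreover a
nonnegative supersolution vanishing at a vertex vanishes at its neighbours, hence everywhere,
which makes every column of the inverse strictly positive.
-/

open Finset

namespace SimpleGraph

variable {V : Type*} {G : SimpleGraph V}

theorem Preconnected.forall_of_adj_closed (hG : G.Preconnected) {P : V → Prop}
    (hP : ∀ i j, G.Adj i j → P i → P j) {u : V} (hu : P u) (v : V) : P v := by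
  obtain ⟨w⟩ := hG u v
  induction w with
  | nil => exact hu
  | cons hA _ ih => exact ih (hP _ _ hA hu)

variable [Fintype V] [DecidableEq V] [DecidableRel G.Adj]

theorem lapMatrix_add_diagonal_mulVec_apply (q x : V → ℝ) (i : V) :
    ((G.lapMatrix ℝ + diagonal q) *ᵥ x) i = ∑ j ∈ G.neighborFinset i, (x i - x j) + q i * x i := by
  rw [add_mulVec, Pi.add_apply, lapMatrix_mulVec_apply, mulVec_diagonal, sum_sub_distrib,
    sum_const, card_neighborFinset_eq_degree, nsmul_eq_mul]

variable {q : V → ℝ}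

theorem nonneg_of_lapMatrix_add_diagonal_mulVec_nonneg (hG : G.Preconnected) (hq : 0 ≤ q)
    (hq₀ : q ≠ 0) {x : V → ℝ} (hx : 0 ≤ (G.lapMatrix ℝ + diagonal q) *ᵥ x) : 0 ≤ x := by
  by_contra hneg
  obtain ⟨i₀, hi₀⟩ : ∃ i, x i < 0 := by simpa [Pi.le_def] using hneg
  obtain ⟨k, -, hk⟩ := exists_min_image univ x ⟨i₀, mem_univ _⟩
  have hm : x k < 0 := (hk i₀ (mem_univ _)).trans_lt hi₀
  have hmin : ∀ i, x i = x k → q i = 0 ∧ ∀ j, G.Adj i j → x j = x k := by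
    intro i hi
    have hrow := hx i
    rw [Pi.zero_apply, lapMatrix_add_diagonal_mulVec_apply, hi] at hrow
    have hterms : ∀ j ∈ G.neighborFinset i, x k - x j ≤ 0 := fun j _ =>
      sub_nonpos.2 (hk j (mem_univ _))
    have hqi : q i * x k ≤ 0 := mul_nonpos_of_nonneg_of_nonpos (hq i) hm.le
    have hsum := sum_nonpos hterms
    refine ⟨(mul_eq_zero.1 (by linarith)).resolve_right hm.ne, fun j hj => ?_⟩
    have := (sum_eq_zero_iff_of_nonpos hterms).1 (by linarith) j ((mem_neighborFinset _ _ _).2 hj)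
    linarith
  exact hq₀ <| funext fun i =>
    (hmin i (hG.forall_of_adj_closed (fun i j hij hi => (hmin i hi).2 j hij) rfl i)).1

theorem pos_of_lapMatrix_add_diagonal_mulVec_nonneg (hG : G.Preconnected) {x : V → ℝ}
    (hx₀ : 0 ≤ x) (hx : 0 ≤ (G.lapMatrix ℝ + diagonal q) *ᵥ x)
    (hne : (G.lapMatrix ℝ + diagonal q) *ᵥ x ≠ 0) (i : V) : 0 < x i := by
  have hzero : ∀ i j, G.Adj i j → x i = 0 → x j = 0 := by
    intro i j hij hi
    have hrow := hx i
    rw [Pi.zero_apply, lapMatrix_add_diagonal_mulVec_apply, hi] at hrow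
    have hterms : ∀ j ∈ G.neighborFinset i, 0 - x j ≤ 0 := fun j _ => sub_nonpos.2 (hx₀ j)
    have := (sum_eq_zero_iff_of_nonpos hterms).1
      (le_antisymm (sum_nonpos hterms) (by linarith)) j ((mem_neighborFinset _ _ _).2 hij)
    linarith
  refine (hx₀ i).lt_of_ne fun hi => hne ?_
  have : x = 0 := funext (hG.forall_of_adj_closed hzero hi.symm)
  rw [this, mulVec_zero]

theorem isUnit_det_lapMatrix_add_diagonal (hG : G.Preconnected) (hq : 0 ≤ q) (hq₀ : q ≠ 0) :
    IsUnit (G.lapMatrix ℝ + diagonal q).det := by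
  rw [isUnit_iff_ne_zero, Ne, ← exists_mulVec_eq_zero_iff]
  rintro ⟨x, hx, hMx⟩
  have hpos := nonneg_of_lapMatrix_add_diagonal_mulVec_nonneg hG hq hq₀ hMx.ge
  have hneg := nonneg_of_lapMatrix_add_diagonal_mulVec_nonneg hG hq hq₀ (x := -x)
    (by rw [mulVec_neg, hMx, neg_zero])
  exact hx (le_antisymm (neg_nonneg.1 hneg) hpos)

theorem inv_lapMatrix_add_diagonal_apply_pos (hG : G.Preconnected) (hq : 0 ≤ q) (hq₀ : q ≠ 0)
    (i j : V) : 0 < (G.lapMatrix ℝ + diagonal q)⁻¹ i j := by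
  set M := G.lapMatrix ℝ + diagonal q
  have hMx : M *ᵥ M⁻¹.col j = Pi.single j 1 := by
    rw [← mulVec_single_one, mulVec_mulVec,
      mul_nonsing_inv _ (isUnit_det_lapMatrix_add_diagonal hG hq hq₀), one_mulVec]
  have hsingle : (0 : V → ℝ) ≤ Pi.single j 1 := Pi.single_nonneg.2 zero_le_one
  exact pos_of_lapMatrix_add_diagonal_mulVec_nonneg hG
    (nonneg_of_lapMatrix_add_diagonal_mulVec_nonneg hG hq hq₀ (hMx ▸ hsingle)) (hMx ▸ hsingle)
    (hMx ▸ Pi.single_ne_zero_iff.2 one_ne_zero) i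

instance {n : ℕ} : DecidableRel (pathGraph n).Adj := fun _ _ =>
  decidable_of_iff _ pathGraph_adj.symm

theorem pathGraph_degree_le_two {n : ℕ} (i : Fin n) : (pathGraph n).degree i ≤ 2 := by
  rw [← card_neighborFinset_eq_degree]
  refine (card_le_card_of_injOn Fin.val (t := {(i : ℕ) - 1, (i : ℕ) + 1}) ?_
    Fin.val_injective.injOn).trans card_le_two
  intro j hj
  rw [mem_coe, mem_neighborFinset, pathGraph_adj] at hj
  simp only [coe_insert, coe_singleton, Set.mem_insert_iff, Set.mem_singleton_iff]
  omega

theorem pathGraph_degree_zero_le_one (n : ℕ) : (pathGraph (n + 1)).degree 0 ≤ 1 := by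
  rw [← card_neighborFinset_eq_degree, card_le_one]
  intro a ha b hb
  rw [mem_neighborFinset, pathGraph_adj] at ha hb
  ext
  simp only [Fin.val_zero] at ha hb
  omega

end SimpleGraph

open SimpleGraph

theorem triQ_eq_neg_lapMatrix_add_diagonal {n : ℕ} (v : Fin n → ℤ) :
    triQ v = -((pathGraph n).lapMatrix ℝ +
      diagonal fun i => (v i : ℝ) - (pathGraph n).degree i) := by
  ext i j
  rcases eq_or_ne i j with rfl | hij
  · simp [triQ, lapMatrix, degMatrix]
  · simp [triQ, lapMatrix, degMatrix, hij, pathGraph_adj]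

theorem stmt3 {n : ℕ} (v : Fin n → ℤ) (hv : ∀ i, 2 ≤ v i) :
    IsUnit (triQ v).det ∧ ∀ i j, (triQ v)⁻¹ i j < 0 := by
  obtain _ | n := n
  · exact ⟨by simp, fun i => i.elim0⟩
  set G := pathGraph (n + 1)
  set q : Fin (n + 1) → ℝ := fun i => (v i : ℝ) - G.degree i
  have hG : G.Preconnected := pathGraph_preconnected _
  have hdeg : ∀ i, (G.degree i : ℝ) ≤ 2 := fun i => by exact_mod_cast pathGraph_degree_le_two i
  have hq : 0 ≤ q := fun i => sub_nonneg.2 ((hdeg i).trans (by exact_mod_cast hv i))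
  have hq₀ : q ≠ 0 := fun h => by
    have hdeg₀ : (G.degree 0 : ℝ) ≤ 1 := by exact_mod_cast pathGraph_degree_zero_le_one n
    have hv₀ : (1 : ℝ) < v 0 := by exact_mod_cast (hv 0).trans_lt' one_lt_two
    exact (sub_pos.2 (hdeg₀.trans_lt hv₀)).ne' (congrFun h 0)
  have hunit := isUnit_det_lapMatrix_add_diagonal hG hq hq₀
  rw [triQ_eq_neg_lapMatrix_add_diagonal]
  refine ⟨by rw [det_neg]; exact (isUnit_neg_one.pow _).mul hunit, fun i j => ?_⟩
  rw [inv_eq_left_inv (B := -(G.lapMatrix ℝ + diagonal q)⁻¹)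
    (by rw [neg_mul_neg, nonsing_inv_mul _ hunit]), neg_apply, neg_lt_zero]
  exact inv_lapMatrix_add_diagonal_apply_pos hG hq hq₀ i j
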